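/- For every h ∈ ℂ with Re(h) > 1, every n ∈ ℕ with n ≥ 1, and every m ∈ ℕ with m ≥ 1, one has the difference equation q^{(h−1)n} · β_{m,q}^h(n) − β_{m,q}^h = m · Σ_{l=0}^{n−1} q^{hl}·[l]_q^{m−1} − (h−1)(1−q) · Σ_{l=0}^{n−1} q^{(h−1)l}·[l]_q^{m}, where in the l = 0 term the convention [0]_q^{0} = 1 is used. -/

import Mathlib

open Complex Finset Filter

/-- Complex power `q^z := exp(z·log q)` for a real base `q`. -/
noncomputable def qcpow (q : ℝ) (z : ℂ) : ℂ := Complex.exp (z * (Real.log q : ℂ))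

/-- The complex `q`-number `[z]_q = (1 - q^z)/(1 - q)`. -/
noncomputable def qnum (q : ℝ) (z : ℂ) : ℂ := (1 - qcpow q z) / (1 - (q : ℂ))

/-- The real `q`-number `[y]_q = (1 - q^y)/(1 - q)` for real `y`. -/
noncomputable def qnumR (q : ℝ) (y : ℝ) : ℝ := (1 - Real.exp (y * Real.log q)) / (1 - q)

/-- The `(h,q)`-Bernoulli polynomial
`β_{n,q}^h(x) = (1-q)^{-n} ∑_{l=0}^{n} C(n,l) (-1)^l q^{lx} (l+h-1)/[l+h-1]_q`. -/
noncomputable def qbeta (q : ℝ) (h : ℂ) (n : ℕ) (x : ℝ) : ℂ :=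
  (1 - (q : ℂ))⁻¹ ^ n * ∑ l ∈ Finset.range (n + 1),
    (n.choose l : ℂ) * (-1) ^ l * qcpow q ((l : ℂ) * (x : ℂ)) *
      (((l : ℂ) + h - 1) / qnum q ((l : ℂ) + h - 1))

/-
Multiplying the `l`-th term of `β_{m,q}^h(x + 1)` by `q^{h-1}` turns `q^{l(x+1)}` into
`q^{lx} q^{l+h-1}`, and `(q^{l+h-1} - 1)(l+h-1)/[l+h-1]_q = -(1-q)(l+h-1)` cancels the
`q`-number in the denominator. Hence `q^{h-1} β_{m,q}^h(x+1) - β_{m,q}^h(x)` is a binomial sum in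
`y = q^x` weighted by `l + h - 1`, which the binomial theorem and its derivative evaluate in terms
of `1 - y = (1-q)[x]_q`. Weighting this shift identity at `x = l` by `q^{(h-1)l}` and summing over
`l < n` telescopes to the difference equation.
-/

section Binomial

variable {R : Type*} [CommSemiring R]

theorem sum_range_choose_mul_pow (x : R) (m : ℕ) :
    ∑ l ∈ range (m + 1), (m.choose l : R) * x ^ l = (1 + x) ^ m := by
  rw [add_comm 1 x, add_pow]
  exact sum_congr rfl fun l _ => by rw [one_pow, mul_one, mul_comm]

theorem sum_range_mul_choose_mul_pow (x : R) (m : ℕ) :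
    ∑ l ∈ range (m + 1), (l : R) * m.choose l * x ^ l = m * x * (1 + x) ^ (m - 1) := by
  cases m with
  | zero => simp
  | succ k =>
    have hterm (l : ℕ) : ((l + 1 : ℕ) : R) * (k + 1).choose (l + 1) * x ^ (l + 1) =
        (k + 1 : ℕ) * x * (k.choose l * x ^ l) := by
      rw [← Nat.cast_mul, mul_comm (l + 1), ← Nat.add_one_mul_choose_eq]
      push_cast
      ring
    rw [sum_range_succ', sum_congr rfl fun l _ => hterm l, ← mul_sum,
      sum_range_choose_mul_pow]
    simp

theorem sum_range_choose_mul_pow_mul_add (x c : R) (m : ℕ) :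
    ∑ l ∈ range (m + 1), (m.choose l : R) * x ^ l * (l + c) =
      m * x * (1 + x) ^ (m - 1) + c * (1 + x) ^ m := by
  rw [← sum_range_mul_choose_mul_pow, ← sum_range_choose_mul_pow, mul_sum, ← sum_add_distrib]
  exact sum_congr rfl fun l _ => by ring

end Binomial

section QPower

variable {q : ℝ}

theorem qcpow_zero (q : ℝ) : qcpow q 0 = 1 := by simp [qcpow]

theorem qcpow_add (q : ℝ) (a b : ℂ) : qcpow q (a + b) = qcpow q a * qcpow q b := by
  simp [qcpow, add_mul, Complex.exp_add]

theorem qcpow_nat_mul (q : ℝ) (l : ℕ) (z : ℂ) : qcpow q (l * z) = qcpow q z ^ l := by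
  simp [qcpow, mul_assoc, Complex.exp_nat_mul]

theorem ofReal_qnumR (q y : ℝ) : (qnumR q y : ℂ) = (1 - qcpow q y) / (1 - q) := by
  simp [qnumR, qcpow]

theorem norm_qcpow (q : ℝ) (z : ℂ) : ‖qcpow q z‖ = Real.exp (z.re * Real.log q) := by
  simp [qcpow, Complex.norm_exp]

theorem qcpow_ne_one (hq0 : 0 < q) (hq1 : q < 1) {z : ℂ} (hz : 0 < z.re) : qcpow q z ≠ 1 := by
  intro h
  have : ‖qcpow q z‖ < 1 := by
    rw [norm_qcpow, Real.exp_lt_one_iff]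
    exact mul_neg_of_pos_of_neg hz (Real.log_neg hq0 hq1)
  simp [h] at this

theorem sub_one_mul_div_qnum (hq1 : q ≠ 1) {z : ℂ} (hz : qcpow q z ≠ 1) :
    (qcpow q z - 1) * (z / qnum q z) = -(1 - q) * z := by
  have hq : (1 : ℂ) - q ≠ 0 := sub_ne_zero.2 (by exact_mod_cast hq1.symm)
  have hz' : 1 - qcpow q z ≠ 0 := sub_ne_zero.2 hz.symm
  rw [qnum]
  field_simp
  ring

end QPower

section Bernoulli

variable {q : ℝ} {h : ℂ}

theorem qcpow_sub_one_mul_qbeta_add_one_sub_qbeta (hq0 : 0 < q) (hq1 : q < 1) (hh : 1 < h.re)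
    (m : ℕ) (x : ℝ) :
    qcpow q (h - 1) * qbeta q h m (x + 1) - qbeta q h m x =
      m * qcpow q x * (qnumR q x : ℂ) ^ (m - 1) - (h - 1) * (1 - q) * (qnumR q x : ℂ) ^ m := by
  set y := qcpow q x
  have hterm (l : ℕ) :
      qcpow q (h - 1) * qcpow q (l * ((x + 1 : ℝ) : ℂ)) * ((l + h - 1) / qnum q (l + h - 1)) -
          qcpow q (l * x) * ((l + h - 1) / qnum q (l + h - 1)) =
        -(1 - q) * (y ^ l * (l + (h - 1))) := by
    have hre : 0 < ((l : ℂ) + h - 1).re := by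
      simp only [sub_re, add_re, natCast_re, one_re]
      linarith [(Nat.cast_nonneg l : (0 : ℝ) ≤ l)]
    have hshift : qcpow q (h - 1) * qcpow q (l * ((x + 1 : ℝ) : ℂ)) =
        y ^ l * qcpow q (l + h - 1) := by
      rw [← qcpow_nat_mul, ← qcpow_add, ← qcpow_add]
      congr 1
      push_cast
      ring
    calc _ = y ^ l * ((qcpow q (l + h - 1) - 1) * ((l + h - 1) / qnum q (l + h - 1))) := by
          rw [hshift, qcpow_nat_mul]
          ring
      _ = _ := by
          rw [sub_one_mul_div_qnum hq1.ne (qcpow_ne_one hq0 hq1 hre)]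
          ring
  have hsum : qcpow q (h - 1) * qbeta q h m (x + 1) - qbeta q h m x =
      -(1 - q) * (1 - (q : ℂ))⁻¹ ^ m *
        ∑ l ∈ range (m + 1), (m.choose l : ℂ) * (-y) ^ l * (l + (h - 1)) := by
    simp only [qbeta, mul_sum, ← sum_sub_distrib]
    refine sum_congr rfl fun l _ => ?_
    rw [neg_pow]
    linear_combination ((1 - (q : ℂ))⁻¹ ^ m * m.choose l * (-1) ^ l) * hterm l
  have hq : (1 : ℂ) - q ≠ 0 := sub_ne_zero.2 (by exact_mod_cast hq1.ne')
  rw [hsum, sum_range_choose_mul_pow_mul_add, ofReal_qnumR]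
  cases m with
  | zero =>
    simp only [pow_zero, mul_one, CharP.cast_eq_zero, zero_mul, zero_add, zero_sub]
    ring
  | succ k =>
    simp only [Nat.add_sub_cancel, ← sub_eq_add_neg, div_pow, inv_pow, pow_succ]
    field_simp
    ring

end Bernoulli

theorem qbeta_difference_equation_general (q : ℝ) (hq0 : 0 < q) (hq1 : q < 1)
    (h : ℂ) (hh : 1 < h.re) (n : ℕ) (m : ℕ) :
    qcpow q ((h - 1) * (n : ℂ)) * qbeta q h m (n : ℝ) - qbeta q h m 0 =
      (m : ℂ) * ∑ l ∈ Finset.range n, qcpow q (h * (l : ℂ)) * ((qnumR q (l : ℝ) : ℂ) ^ (m - 1)) -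
      (h - 1) * (1 - (q : ℂ)) *
        ∑ l ∈ Finset.range n, qcpow q ((h - 1) * (l : ℂ)) * ((qnumR q (l : ℝ) : ℂ) ^ m) := by
  set f : ℕ → ℂ := fun k => qcpow q ((h - 1) * k) * qbeta q h m k
  have hf0 : f 0 = qbeta q h m 0 := by simp [f, qcpow_zero]
  rw [← hf0, ← sum_range_sub f, mul_sum, mul_sum, ← sum_sub_distrib]
  refine sum_congr rfl fun l _ => ?_
  have hsplit : qcpow q ((h - 1) * (l + 1 : ℕ)) = qcpow q ((h - 1) * l) * qcpow q (h - 1) := by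
    rw [← qcpow_add]
    congr 1
    push_cast
    ring
  have hweight : qcpow q (h * l) = qcpow q ((h - 1) * l) * qcpow q l := by
    rw [← qcpow_add]
    congr 1
    ring
  calc f (l + 1) - f l
      = qcpow q ((h - 1) * l) * (qcpow q (h - 1) * qbeta q h m (l + 1) - qbeta q h m l) := by
        simp only [f]
        rw [hsplit]
        push_cast
        ring
    _ = _ := by
        rw [qcpow_sub_one_mul_qbeta_add_one_sub_qbeta hq0 hq1 hh, hweight, ofReal_natCast]
        ring

/-- the difference equation for `(h,q)`-Bernoulli polynomials
(with the convention `[0]_q^0 = 1`). -/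
theorem qbeta_difference_equation (q : ℝ) (hq0 : 0 < q) (hq1 : q < 1)
    (h : ℂ) (hh : 1 < h.re) (n : ℕ) (hn : 1 ≤ n) (m : ℕ) (hm : 1 ≤ m) :
    qcpow q ((h - 1) * (n : ℂ)) * qbeta q h m (n : ℝ) - qbeta q h m 0 =
      (m : ℂ) * ∑ l ∈ Finset.range n, qcpow q (h * (l : ℂ)) * ((qnumR q (l : ℝ) : ℂ) ^ (m - 1)) -
      (h - 1) * (1 - (q : ℂ)) *
        ∑ l ∈ Finset.range n, qcpow q ((h - 1) * (l : ℂ)) * ((qnumR q (l : ℝ) : ℂ) ^ m) :=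
  qbeta_difference_equation_general q hq0 hq1 h hh n m
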